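/- arXiv:2305.19874 — 2 statements merged into one kernel-verified Lean document; each statement's English description precedes it below -/
import Mathlib

section
/- Let M₁, M₂ be positive semidefinite n×n complex matrices satisfying the completeness relation M₁†M₁ + M₂†M₂ = I. Then there exists a Hermitian matrix X such that M₁ = cos(X) and M₂ = sin(X). -/
/-!
The completeness relation gives `M₂² = 1 - M₁² ≤ 1`, so the spectrum of `M₂ ≥ 0` lies in
`[-1, 1]` and `X = arcsin M₂` (continuous functional calculus) is Hermitian with `sin X = M₂`.
Moreover `cos X = √(1 - M₂²)` is positive semidefinite with `(cos X)² = 1 - M₂² = M₁²`, and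
nonnegative square roots are unique, so `cos X = M₁`. The exponential formulas `matCos`, `matSin`
agree with the functional calculus since both commute with unitary conjugation and act entrywise
on diagonal matrices.
-/

open Matrix
open scoped ComplexOrder

/-- Matrix cosine via the exponential: `cos X = (exp(iX) + exp(-iX))/2`. -/
noncomputable def matCos {n : ℕ} (X : Matrix (Fin n) (Fin n) ℂ) : Matrix (Fin n) (Fin n) ℂ :=
  ((2 : ℂ)⁻¹) • (NormedSpace.exp (Complex.I • X) + NormedSpace.exp (-(Complex.I • X)))

/-- Matrix sine via the exponential: `sin X = (exp(iX) - exp(-iX))/(2i)`. -/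
noncomputable def matSin {n : ℕ} (X : Matrix (Fin n) (Fin n) ℂ) : Matrix (Fin n) (Fin n) ℂ :=
  ((2 * Complex.I : ℂ)⁻¹) • (NormedSpace.exp (Complex.I • X) - NormedSpace.exp (-(Complex.I • X)))

namespace CFC

section

variable {A : Type*} [Ring A] [StarRing A] [TopologicalSpace A] [Algebra ℝ A]
  [ContinuousFunctionalCalculus ℝ A IsSelfAdjoint]

lemma cfc_mul_self_id {b : A} (hb : IsSelfAdjoint b) : cfc (fun t : ℝ => t * t) b = b * b := by
  rw [cfc_mul (fun t : ℝ => t) (fun t => t) b, cfc_id' ℝ b]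

variable [PartialOrder A] [StarOrderedRing A] [NonnegSpectrumClass ℝ A]

lemma abs_le_one_of_mem_spectrum_of_mul_self_le_one {b : A} (hb : IsSelfAdjoint b)
    (h : b * b ≤ 1) {t : ℝ} (ht : t ∈ spectrum ℝ b) : |t| ≤ 1 := by
  rw [← cfc_mul_self_id hb] at h
  exact abs_le_one_iff_mul_self_le_one.mpr ((cfc_le_one_iff (fun t : ℝ => t * t) b).mp h t ht)

variable [IsTopologicalRing A] [T2Space A]

theorem exists_cfc_cos_cfc_sin_eq {a b : A} (ha : 0 ≤ a) (hb : 0 ≤ b) (h : a * a + b * b = 1) :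
    ∃ x : A, IsSelfAdjoint x ∧ cfc Real.cos x = a ∧ cfc Real.sin x = b := by
  have hb_sa : IsSelfAdjoint b := .of_nonneg hb
  have hcos_sq : 1 - b * b = a * a := (eq_sub_of_add_eq h).symm
  have hsq : b * b ≤ 1 := by
    have := star_mul_self_nonneg a
    rwa [(IsSelfAdjoint.of_nonneg ha).star_eq, ← hcos_sq, sub_nonneg] at this
  have hspec : ∀ t ∈ spectrum ℝ b, t ∈ Set.Icc (-1 : ℝ) 1 := fun t ht =>
    abs_le.mp (abs_le_one_of_mem_spectrum_of_mul_self_le_one hb_sa hsq ht)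
  refine ⟨cfc Real.arcsin b, cfc_predicate _ _, ?_, ?_⟩
  · rw [← cfc_comp' Real.cos Real.arcsin b]
    refine (mul_self_eq_mul_self_iff _ a (cfc_nonneg fun t _ => Real.cos_arcsin_nonneg t) ha).mp ?_
    rw [← cfc_mul (fun t => Real.cos (Real.arcsin t)) (fun t => Real.cos (Real.arcsin t)) b,
      ← hcos_sq, ← cfc_mul_self_id hb_sa, ← cfc_one ℝ b, ← cfc_sub 1 (fun t : ℝ => t * t) b]
    refine cfc_congr fun t ht => ?_
    obtain ⟨hlo, hhi⟩ := hspec t ht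
    rw [Real.cos_arcsin, Real.mul_self_sqrt (by nlinarith), sq]
    rfl
  · rw [← cfc_comp' Real.sin Real.arcsin b]
    nth_rw 2 [← cfc_id' ℝ b]
    exact cfc_congr fun t ht => Real.sin_arcsin (hspec t ht).1 (hspec t ht).2

end

end CFC

open Unitary

lemma Matrix.exp_conjStarAlgAut {m : Type*} [Fintype m] [DecidableEq m]
    (U : unitary (Matrix m m ℂ)) (A : Matrix m m ℂ) :
    NormedSpace.exp (conjStarAlgAut ℂ _ U A) = conjStarAlgAut ℂ _ U (NormedSpace.exp A) := by
  simpa using Matrix.exp_units_conj (Unitary.toUnits U) A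

section

variable {n : ℕ}

lemma matCos_conjStarAlgAut (U : unitary (Matrix (Fin n) (Fin n) ℂ))
    (A : Matrix (Fin n) (Fin n) ℂ) :
    matCos (conjStarAlgAut ℂ _ U A) = conjStarAlgAut ℂ _ U (matCos A) := by
  rw [matCos, matCos, ← map_smul, ← map_neg, exp_conjStarAlgAut, exp_conjStarAlgAut, ← map_add,
    ← map_smul]

lemma matSin_conjStarAlgAut (U : unitary (Matrix (Fin n) (Fin n) ℂ))
    (A : Matrix (Fin n) (Fin n) ℂ) :
    matSin (conjStarAlgAut ℂ _ U A) = conjStarAlgAut ℂ _ U (matSin A) := by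
  rw [matSin, matSin, ← map_smul, ← map_neg, exp_conjStarAlgAut, exp_conjStarAlgAut, ← map_sub,
    ← map_smul]

lemma matCos_diagonal (d : Fin n → ℂ) :
    matCos (diagonal d) = diagonal fun i => Complex.cos (d i) := by
  rw [matCos, ← diagonal_smul, diagonal_neg, exp_diagonal, exp_diagonal, diagonal_add,
    ← diagonal_smul]
  congr 1
  funext i
  simp only [Pi.coe_exp, Pi.smul_apply, smul_eq_mul, ← Complex.exp_eq_exp_ℂ, Complex.cos]
  ring_nf

lemma matSin_diagonal (d : Fin n → ℂ) :
    matSin (diagonal d) = diagonal fun i => Complex.sin (d i) := by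
  rw [matSin, ← diagonal_smul, diagonal_neg, exp_diagonal, exp_diagonal, diagonal_sub,
    ← diagonal_smul]
  congr 1
  funext i
  simp only [Pi.coe_exp, Pi.smul_apply, smul_eq_mul, ← Complex.exp_eq_exp_ℂ, Complex.sin,
    _root_.mul_inv_rev, Complex.inv_I]
  ring_nf

lemma Matrix.IsHermitian.matCos_eq_cfc {X : Matrix (Fin n) (Fin n) ℂ} (hX : X.IsHermitian) :
    matCos X = cfc Real.cos X := by
  conv_lhs => rw [hX.spectral_theorem]
  rw [hX.cfc_eq, IsHermitian.cfc, matCos_conjStarAlgAut, matCos_diagonal]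
  congr 2
  ext i
  simp [Complex.ofReal_cos]

lemma Matrix.IsHermitian.matSin_eq_cfc {X : Matrix (Fin n) (Fin n) ℂ} (hX : X.IsHermitian) :
    matSin X = cfc Real.sin X := by
  conv_lhs => rw [hX.spectral_theorem]
  rw [hX.cfc_eq, IsHermitian.cfc, matSin_conjStarAlgAut, matSin_diagonal]
  congr 2
  ext i
  simp [Complex.ofReal_sin]

end

open scoped MatrixOrder

theorem stmt_0 {n : ℕ} (M₁ M₂ : Matrix (Fin n) (Fin n) ℂ)
    (hM₁ : M₁.PosSemidef) (hM₂ : M₂.PosSemidef)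
    (hcomp : M₁ᴴ * M₁ + M₂ᴴ * M₂ = 1) :
    ∃ X : Matrix (Fin n) (Fin n) ℂ, X.IsHermitian ∧ M₁ = matCos X ∧ M₂ = matSin X := by
  rw [hM₁.isHermitian.eq, hM₂.isHermitian.eq] at hcomp
  obtain ⟨X, hX, hcos, hsin⟩ := CFC.exists_cfc_cos_cfc_sin_eq
    (nonneg_iff_posSemidef.mpr hM₁) (nonneg_iff_posSemidef.mpr hM₂) hcomp
  replace hX : X.IsHermitian := hX
  exact ⟨X, hX, by rw [hX.matCos_eq_cfc, hcos], by rw [hX.matSin_eq_cfc, hsin]⟩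
end

section
/- Assume Lₖ†Lₖ = I for all k. Let ρ(t) = 𝔼(μ(t) ψ(t)ψ(t)†) where μ is the influence martingale with rates γₖ(t) + Γₖ(t) = m(t). Then tr(ρ(t)) = 𝔼(μ(t)) and if the expected number of jumps in [0,t] has generator rates γₖ, 𝔼(μ(t)) = 1 for all t (i.e. μ is a mean-one martingale). -/
open Matrix MeasureTheory
set_option maxHeartbeats 1000000 in

/-- For `L` with `L†L = I` (so trajectory states stay normalized), the trace of the
martingale-weighted average state equals the expectation of the influence martingale,
and for a single Lindblad channel with constant rates (jumps forming a Poisson process of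
rate `γ`, with `γ + Γ = m`) the influence martingale `μ(t) = e^{mt}(−Γ/γ)^{N_t}` has
expectation `1`. -/
theorem stmt_14 {n : ℕ} {Ω : Type*} [MeasurableSpace Ω]
    (P : Measure Ω) [IsProbabilityMeasure P]
    (μ : Ω → ℝ) (hμint : Integrable μ P)
    (ψ : Ω → EuclideanSpace ℂ (Fin n)) (hψ : ∀ ω, ‖ψ ω‖ = 1)
    (hint : ∀ i j, Integrable (fun ω => (μ ω : ℂ) * (ψ ω i * (starRingEnd ℂ) (ψ ω j))) P)
    (ρ : Matrix (Fin n) (Fin n) ℂ)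
    (hρ : ∀ i j, ρ i j = ∫ ω, (μ ω : ℂ) * (ψ ω i * (starRingEnd ℂ) (ψ ω j)) ∂P)
    (γ Γ m t : ℝ) (hγ : 0 < γ) (hm : γ + Γ = m) (ht : 0 ≤ t) :
    ρ.trace = ∫ ω, (μ ω : ℂ) ∂P ∧
      ∑' k : ℕ, (Real.exp (-(γ * t)) * (γ * t) ^ k / k.factorial)
          * (Real.exp (m * t) * (-Γ / γ) ^ k) = 1 := by
  constructor
  · have key : ∀ ω, ∑ i, (μ ω : ℂ) * (ψ ω i * (starRingEnd ℂ) (ψ ω i)) = (μ ω : ℂ) := by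
      intro ω
      rw [← Finset.mul_sum]
      have h1 : ∀ i, ψ ω i * (starRingEnd ℂ) (ψ ω i) = ((‖ψ ω i‖ ^ 2 : ℝ) : ℂ) := by
        intro i; rw [Complex.mul_conj']; norm_cast
      simp_rw [h1]
      have h2 : ∑ i, ‖ψ ω i‖ ^ 2 = 1 := by
        have := hψ ω
        have hn := EuclideanSpace.norm_eq (ψ ω)
        rw [this] at hn
        have : ∑ i, ‖ψ ω i‖ ^ 2 = 1 ^ 2 := by
          rw [← Real.sq_sqrt (by positivity : (0:ℝ) ≤ ∑ i, ‖ψ ω i‖ ^ 2), ← hn]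
        simpa using this
      have h3 : ∑ i, ((‖ψ ω i‖ ^ 2 : ℝ) : ℂ) = 1 := by exact_mod_cast h2
      rw [h3, mul_one]
    rw [Matrix.trace]
    simp only [Matrix.diag, hρ]
    rw [← integral_finset_sum _ (fun i _ => hint i i)]
    exact integral_congr_ae (Filter.Eventually.of_forall fun ω => key ω)
  · have hΓ : m - γ = Γ := by linarith
    have hsum : ∀ k : ℕ,
        (Real.exp (-(γ * t)) * (γ * t) ^ k / k.factorial) * (Real.exp (m * t) * (-Γ / γ) ^ k)
        = Real.exp (-(γ * t)) * Real.exp (m * t) * ((-Γ * t) ^ k / k.factorial) := by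
      intro k
      have hγk : (γ : ℝ) ^ k ≠ 0 := pow_ne_zero _ hγ.ne'
      rw [div_pow, mul_pow, mul_pow]
      field_simp
    simp_rw [hsum]
    rw [tsum_mul_left]
    have hexp : ∑' k : ℕ, (-Γ * t) ^ k / k.factorial = Real.exp (-Γ * t) := by
      rw [Real.exp_eq_exp_ℝ, NormedSpace.exp_eq_tsum_div]
    rw [hexp, ← Real.exp_add, ← Real.exp_add]
    rw [show -(γ * t) + m * t + -Γ * t = 0 by rw [← hm]; ring]
    exact Real.exp_zero
end
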